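/- Let a be a real number, let m, n be positive integers, and for k = 1,…,2m let x_k = (x_{k,1},…,x_{k,n}) ∈ ℝ^n be such that |x_{1,r_1} x_{2,r_2} ⋯ x_{2m,r_{2m}}| < 1 for all tuples (r_1,…,r_{2m}) ∈ {1,…,n}^{2m}. Then Det( (1 − x_{1,r_1} x_{2,r_2} ⋯ x_{2m,r_{2m}})^{−a} )_{1≤r_1,…,r_{2m}≤n} = ∑_{i_1 > ⋯ > i_n ≥ 0} ∏_{j=1}^{n} ( (a)_{i_j} / i_j! ) · ∏_{k=1}^{2m} det( (x_{k,r})^{i_s} )_{1≤r,s≤n}, the sum running over all strictly decreasing n-tuples of nonnegative integers. In particular, if a ≥ 0 and x_{k,1} > ⋯ > x_{k,n} ≥ 0 for every k, this hyperdeterminant is nonnegative. -/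

import Mathlib

/-!
Expanding every entry as `(1 - z)^(-a) = ∑ᵢ (a)ᵢ/i! zⁱ` and multiplying out, the signed sum over
`σ₁, …, σ₂ₘ` belonging to one exponent tuple `f` factors as `∏ₖ det (x_{k,r}^{f_s})`. This
product is invariant under permutations of `f` (the `2m` signs cancel) and vanishes unless `f` is
injective, so the sum over all tuples is `n!` times the sum over strictly decreasing ones.

For the sign: by Descartes' rule of signs a nonzero polynomial with `n` monomials has fewer than `n`
positive roots, so the generalized Vandermonde determinant `det (x_r^{e_s})` does not vanish for
distinct positive nodes. Once `x_r^{e_last}` is divided out of row `r`, sliding the smallest node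
down to `0` turns it into a determinant of the same kind of size `n - 1`; the intermediate value
theorem then gives positivity by induction on `n`, and nonnegative nodes follow by continuity.
-/

open scoped BigOperators

/-- Cayley's first hyperdeterminant of a real `2m`-dimensional array of size `n`
in each direction. -/
noncomputable def hyperDet (m n : ℕ) (A : (Fin (2 * m) → Fin n) → ℝ) : ℝ :=
  ((n.factorial : ℕ) : ℝ)⁻¹ *
    ∑ σ : Fin (2 * m) → Equiv.Perm (Fin n),
      (∏ k : Fin (2 * m), ((Equiv.Perm.sign (σ k) : ℤ) : ℝ)) *
        ∏ j : Fin n, A (fun k => σ k j)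

/-- The classical rising factorial `(a)_i = a(a+1)⋯(a+i-1)`. -/
noncomputable def risingFactorial (a : ℝ) (i : ℕ) : ℝ :=
  ∏ t ∈ Finset.range i, (a + t)

open Finset

lemma risingFactorial_eq_eval_ascPochhammer (a : ℝ) (i : ℕ) :
    risingFactorial a i = (ascPochhammer ℝ i).eval a := by
  induction i with
  | zero => simp [risingFactorial]
  | succ i ih =>
    rw [risingFactorial, prod_range_succ, ← risingFactorial, ih, ascPochhammer_succ_eval]

lemma risingFactorial_mul_inv_factorial (a : ℝ) (i : ℕ) :
    risingFactorial a i * (i.factorial : ℝ)⁻¹ = Ring.choose (a + i - 1) i := by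
  rw [← Ring.multichoose_eq, eq_comm, eq_mul_inv_iff_mul_eq₀ (by positivity), mul_comm,
    ← nsmul_eq_mul, Ring.factorial_nsmul_multichoose_eq_ascPochhammer,
    Polynomial.ascPochhammer_smeval_eq_eval, risingFactorial_eq_eval_ascPochhammer]

lemma risingFactorial_nonneg {a : ℝ} (ha : 0 ≤ a) (i : ℕ) : 0 ≤ risingFactorial a i :=
  prod_nonneg fun _ _ => by positivity

lemma mem_eball_zero_one_of_abs_lt {z : ℝ} (hz : |z| < 1) : z ∈ Metric.eball (0 : ℝ) 1 := by
  simpa [Metric.mem_eball, enorm_eq_nnnorm, ← NNReal.coe_lt_one] using hz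

theorem hasSum_negBinomial (a : ℝ) {z : ℝ} (hz : |z| < 1) :
    HasSum (fun i => risingFactorial a i * (i.factorial : ℝ)⁻¹ * z ^ i) ((1 - z) ^ (-a)) := by
  have := (Real.one_div_one_sub_rpow_hasFPowerSeriesOnBall_zero a).hasSum
    (mem_eball_zero_one_of_abs_lt hz)
  simpa [FormalMultilinearSeries.ofScalars_apply_eq, risingFactorial_mul_inv_factorial,
    Real.rpow_neg (sub_nonneg.2 (abs_lt.1 hz).2.le), mul_comm] using this

theorem summable_abs_negBinomial (a : ℝ) {z : ℝ} (hz : |z| < 1) :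
    Summable (fun i => |risingFactorial a i * (i.factorial : ℝ)⁻¹ * z ^ i|) := by
  have h := Real.one_div_one_sub_rpow_hasFPowerSeriesOnBall_zero a
  simpa [FormalMultilinearSeries.ofScalars_apply_eq, risingFactorial_mul_inv_factorial,
    mul_comm] using FormalMultilinearSeries.summable_norm_apply _
      (Metric.eball_subset_eball h.r_le (mem_eball_zero_one_of_abs_lt hz))

section ProductOfSeries

variable {R : Type*} [NormedCommRing R] {β : Type*}

lemma summable_norm_pi_prod : ∀ {n : ℕ} (u : Fin n → β → R),
    (∀ j, Summable fun b => ‖u j b‖) → Summable fun f : Fin n → β => ‖∏ j, u j (f j)‖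
  | 0, _, _ => Summable.of_finite
  | _ + 1, u, hu => by
    rw [← (Fin.consEquiv fun _ => β).summable_iff]
    simpa [Function.comp_def, Fin.consEquiv, Fin.prod_univ_succ] using
      (hu 0).mul_norm (summable_norm_pi_prod (fun j => u j.succ) fun j => hu j.succ)

lemma tsum_pi_prod_eq_prod_tsum [CompleteSpace R] : ∀ {n : ℕ} (u : Fin n → β → R),
    (∀ j, Summable fun b => ‖u j b‖) → ∑' f : Fin n → β, ∏ j, u j (f j) = ∏ j, ∑' b, u j b
  | 0, _, _ => by simp
  | _ + 1, u, hu => by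
    rw [← (Fin.consEquiv fun _ => β).tsum_eq, Fin.prod_univ_succ,
      ← tsum_pi_prod_eq_prod_tsum (fun j => u j.succ) fun j => hu j.succ,
      tsum_mul_tsum_of_summable_norm (hu 0) (summable_norm_pi_prod _ fun j => hu j.succ)]
    simp [Fin.consEquiv, Fin.prod_univ_succ]

end ProductOfSeries

lemma exists_strictAnti_comp_perm {α : Type*} [LinearOrder α] {n : ℕ} {f : Fin n → α}
    (hf : Function.Injective f) : ∃ τ : Equiv.Perm (Fin n), StrictAnti (f ∘ τ) := by
  set τ := Tuple.sort (OrderDual.toDual ∘ f)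
  have hanti : Antitone (f ∘ τ) := monotone_toDual_comp_iff.1 (Tuple.monotone_sort _)
  exact ⟨τ, hanti.strictAnti_of_injective (hf.comp τ.injective)⟩

lemma tsum_eq_factorial_mul_tsum_strictAnti {α : Type*} [LinearOrder α] {n : ℕ}
    {T : (Fin n → α) → ℝ} (hT : Summable T)
    (hperm : ∀ f (τ : Equiv.Perm (Fin n)), T (f ∘ τ) = T f)
    (hinj : ∀ f, ¬ Function.Injective f → T f = 0) :
    ∑' f, T f = n.factorial * ∑' g : {g : Fin n → α // StrictAnti g}, T g := by
  set e : {g : Fin n → α // StrictAnti g} × Equiv.Perm (Fin n) → (Fin n → α) :=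
    fun p => p.1.1 ∘ p.2
  have he : Function.Injective e := by
    rintro ⟨⟨g, hg⟩, τ⟩ ⟨⟨g', hg'⟩, τ'⟩ h
    obtain rfl : g = g' := by
      rw [← hg.range_inj hg', ← EquivLike.range_comp g τ, ← EquivLike.range_comp g' τ']
      exact congrArg Set.range h
    simpa [Equiv.ext_iff] using fun r => hg.injective (congrFun h r)
  have hsupp : Function.support T ⊆ Set.range e := fun f hf => by
    obtain ⟨τ, hτ⟩ := exists_strictAnti_comp_perm (not_imp_comm.1 (hinj f) hf)
    exact ⟨(⟨f ∘ τ, hτ⟩, τ.symm), by simp [e, Function.comp_assoc]⟩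
  have hTe : T ∘ e = fun p => T p.1.1 := funext fun p => hperm p.1.1 p.2
  rw [← he.tsum_eq hsupp]
  change ∑' p, (T ∘ e) p = _
  rw [hTe,
    Summable.tsum_prod' (hTe ▸ hT.comp_injective he) fun _ => Summable.of_finite,
    ← tsum_mul_left]
  simp [Fintype.card_perm]

namespace Polynomial

lemma signVariations_le_card_support_sub_one {R : Type*} [Semiring R] [LinearOrder R]
    (P : R[X]) : P.signVariations ≤ P.support.card - 1 := by
  induction hc : P.support.card using Nat.strong_induction_on generalizing P with
  | _ c ih =>
  by_cases hP : P.eraseLead = 0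
  · have hmono := P.eraseLead_add_monomial_natDegree_leadingCoeff
    rw [hP, zero_add] at hmono
    rw [← hmono, signVariations_monomial]
    exact Nat.zero_le _
  · have hlt := eraseLead_support_card_lt (f := P) fun h => hP (by rw [h, eraseLead_zero])
    have hpos := card_pos.2 (support_nonempty.2 hP)
    have := ih _ (hc ▸ hlt) P.eraseLead rfl
    have := P.signVariations_le_eraseLead_succ
    omega

end Polynomial

open Polynomial in
lemma eq_zero_of_sum_mul_pow_eq_zero {n : ℕ} {c : Fin n → ℝ} {e : Fin n → ℕ}
    (he : Function.Injective e) {t : Fin n → ℝ} (ht : Function.Injective t)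
    (htpos : ∀ j, 0 < t j) (h : ∀ j, ∑ s, c s * t j ^ e s = 0) : c = 0 := by
  classical
  set P : ℝ[X] := ∑ s, monomial (e s) (c s)
  have hcoeff : ∀ s, P.coeff (e s) = c s := fun s => by
    simp [P, finsetSum_coeff, coeff_monomial, he.eq_iff]
  suffices hP : P = 0 from funext fun s => by simp [← hcoeff, hP]
  by_contra hP
  have hsupp : P.support.card ≤ n := calc
    P.support.card ≤ (univ.image e).card := card_le_card fun d hd => by
      contrapose! hd
      simp_all [P, finsetSum_coeff, coeff_monomial]
    _ ≤ n := card_image_le.trans_eq (card_fin n)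
  have hroots : (univ.image t).val ≤ P.roots :=
    (Multiset.le_iff_subset (univ.image t).nodup).2 fun r hr => by
      obtain ⟨j, -, rfl⟩ := mem_image.1 (show r ∈ univ.image t from hr)
      simpa [mem_roots hP, P, eval_finsetSum] using h j
  have hcount : n ≤ P.roots.countP (0 < ·) := by
    calc n = (univ.image t).val.countP (0 < ·) := by
          rw [Multiset.countP_eq_card.2 (by simpa using htpos), card_val,
            card_image_of_injective _ ht, card_fin]
      _ ≤ _ := Multiset.countP_le_of_le _ hroots
  have := (roots_countP_pos_le_signVariations P).trans P.signVariations_le_card_support_sub_one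
  have := card_pos.2 (support_nonempty.2 hP)
  omega

section GeneralizedVandermonde

variable {n : ℕ}

lemma det_pow_ne_zero {x : Fin n → ℝ} (hx : Function.Injective x) (hxpos : ∀ r, 0 < x r)
    {e : Fin n → ℕ} (he : Function.Injective e) :
    (Matrix.of fun r s => x r ^ e s).det ≠ 0 := by
  classical
  intro h
  obtain ⟨v, hv, hMv⟩ := Matrix.exists_mulVec_eq_zero_iff.2 h
  refine hv (eq_zero_of_sum_mul_pow_eq_zero he hx hxpos fun r => ?_)
  simpa [Matrix.mulVec, dotProduct, mul_comm] using congrFun hMv r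

lemma det_pow_eq_prod_pow_mul_det_pow_sub (x : Fin n → ℝ) {e : Fin n → ℕ} {k : ℕ}
    (hk : ∀ s, k ≤ e s) : (Matrix.of fun r s => x r ^ e s).det =
      (∏ r, x r ^ k) * (Matrix.of fun r s => x r ^ (e s - k)).det := by
  rw [← Matrix.det_mul_column]
  congr 1
  ext r s
  simp [← pow_add, Nat.add_sub_cancel' (hk s)]

lemma det_pow_update_last_zero (x : Fin (n + 1) → ℝ) {e : Fin (n + 1) → ℕ}
    (he : StrictAnti e) (he_last : e (Fin.last n) = 0) :
    (Matrix.of fun r s => Function.update x (Fin.last n) 0 r ^ e s).det =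
      (Matrix.of fun r s : Fin n => x r.castSucc ^ e s.castSucc).det := by
  rw [Matrix.det_succ_row _ (Fin.last n), sum_eq_single (Fin.last n)]
  · simp [he_last, Fin.succAbove_last, Matrix.submatrix]
  · intro s _ hs
    have : 0 < e s := he_last ▸ he (lt_of_le_of_ne (Fin.le_last s) hs)
    simp [this.ne']
  · simp

lemma strictAnti_update_last {x : Fin (n + 1) → ℝ} (hx : StrictAnti x) {w : ℝ}
    (hw : w ≤ x (Fin.last n)) : StrictAnti (Function.update x (Fin.last n) w) := by
  intro i j hij
  have hi : i ≠ Fin.last n := (hij.trans_le (Fin.le_last j)).ne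
  rcases eq_or_ne j (Fin.last n) with rfl | hj
  · simpa [hi] using hw.trans_lt (hx hij)
  · simpa [hi, hj] using hx hij

theorem det_pow_pos {x : Fin n → ℝ} (hx : StrictAnti x) (hxpos : ∀ r, 0 < x r)
    {e : Fin n → ℕ} (he : StrictAnti e) : 0 < (Matrix.of fun r s => x r ^ e s).det := by
  induction n with
  | zero => simp
  | succ n ih =>
    have hk : ∀ s, e (Fin.last n) ≤ e s := fun s => he.antitone (Fin.le_last s)
    rw [det_pow_eq_prod_pow_mul_det_pow_sub x hk]
    refine mul_pos (prod_pos fun r _ => pow_pos (hxpos r) _) ?_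
    set e' : Fin (n + 1) → ℕ := fun s => e s - e (Fin.last n)
    have he' : StrictAnti e' := fun i j hij => Nat.sub_lt_sub_right (hk j) (he hij)
    set g : ℝ → ℝ := fun w =>
      (Matrix.of fun r s => Function.update x (Fin.last n) w r ^ e' s).det
    have hg0 : 0 < g 0 := by
      simp only [g]
      rw [det_pow_update_last_zero x he' (Nat.sub_self _)]
      exact ih (hx.comp_strictMono Fin.strictMono_castSucc) (fun r => hxpos _)
        (he'.comp_strictMono Fin.strictMono_castSucc)
    have hg_ne : ∀ w ∈ Set.Ioc 0 (x (Fin.last n)), g w ≠ 0 := fun w hw => by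
      refine det_pow_ne_zero (strictAnti_update_last hx hw.2).injective (fun r => ?_)
        he'.injective
      rcases eq_or_ne r (Fin.last n) with rfl | hr
      · simpa using hw.1
      · simpa [hr] using hxpos r
    have hg_last : g (x (Fin.last n)) = (Matrix.of fun r s => x r ^ e' s).det := by simp [g]
    rw [← hg_last]
    by_contra! hle
    obtain ⟨w, hw, hgw⟩ := intermediate_value_Icc' (hxpos _).le
      (by fun_prop : Continuous g).continuousOn ⟨hle, hg0.le⟩
    exact hg_ne w ⟨lt_of_le_of_ne hw.1 (by rintro rfl; exact hg0.ne' hgw), hw.2⟩ hgw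

theorem det_pow_nonneg {x : Fin n → ℝ} (hx : StrictAnti x) (hx0 : ∀ r, 0 ≤ x r)
    {e : Fin n → ℕ} (he : StrictAnti e) : 0 ≤ (Matrix.of fun r s => x r ^ e s).det := by
  have hlim : Filter.Tendsto (fun ε => (Matrix.of fun r s => (x r + ε) ^ e s).det)
      (nhdsWithin 0 (Set.Ioi 0)) (nhds (Matrix.of fun r s => x r ^ e s).det) := by
    simpa using ((by fun_prop : Continuous fun ε : ℝ =>
      (Matrix.of fun r s => (x r + ε) ^ e s).det).tendsto 0).mono_left nhdsWithin_le_nhds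
  refine ge_of_tendsto hlim (eventually_nhdsWithin_of_forall fun ε (hε : 0 < ε) => ?_)
  exact (det_pow_pos (x := fun r => x r + ε) (fun i j hij => by simpa using hx hij)
    (fun r => by linarith [hx0 r]) he).le

end GeneralizedVandermonde

lemma sum_prod_sign_mul_prod_eq_prod_det {R : Type*} [CommRing R] {ι ν : Type*} [Fintype ι]
    [DecidableEq ι] [Fintype ν] [DecidableEq ν] (M : ι → Matrix ν ν R) :
    ∑ σ : ι → Equiv.Perm ν, (∏ k, ((Equiv.Perm.sign (σ k) : ℤ) : R)) * ∏ j, ∏ k, M k (σ k j) j =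
      ∏ k, (M k).det := by
  simp_rw [Matrix.det_apply', prod_univ_sum, Fintype.piFinset_univ, prod_mul_distrib]
  exact sum_congr rfl fun σ _ => congrArg _ prod_comm

section ProductOfDeterminants

variable {ι : Type*} [Fintype ι] {n : ℕ}

lemma prod_det_pow_comp_perm (hι : Even (Fintype.card ι)) (x : ι → Fin n → ℝ) (f : Fin n → ℕ)
    (τ : Equiv.Perm (Fin n)) :
    ∏ k, (Matrix.of fun r s => x k r ^ (f ∘ τ) s).det =
      ∏ k, (Matrix.of fun r s => x k r ^ f s).det := by
  have hsign : ((Equiv.Perm.sign τ : ℤ) : ℝ) ^ Fintype.card ι = 1 := by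
    obtain ⟨l, hl⟩ := hι
    rcases Int.units_eq_one_or (Equiv.Perm.sign τ) with h | h <;> simp [h, hl, ← two_mul, pow_mul]
  have hcol : ∀ k, (Matrix.of fun r s => x k r ^ (f ∘ τ) s).det =
      (Equiv.Perm.sign τ : ℤ) * (Matrix.of fun r s => x k r ^ f s).det := fun k =>
    Matrix.det_permute' τ (Matrix.of fun r s => x k r ^ f s)
  rw [prod_congr rfl fun k _ => hcol k, prod_mul_distrib, prod_const, card_univ, hsign, one_mul]

lemma prod_det_pow_eq_zero [Nonempty ι] (x : ι → Fin n → ℝ) {f : Fin n → ℕ}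
    (hf : ¬ Function.Injective f) : ∏ k, (Matrix.of fun r s => x k r ^ f s).det = 0 := by
  obtain ⟨j, j', hjj', hne⟩ : ∃ j j', f j = f j' ∧ j ≠ j' := by
    simpa [Function.Injective] using hf
  obtain ⟨k⟩ := ‹Nonempty ι›
  exact prod_eq_zero (mem_univ k) (Matrix.det_zero_of_column_eq hne fun r => by simp [hjj'])

end ProductOfDeterminants

theorem hyperDet_eq_tsum_strictAnti {m n : ℕ} (hm : 0 < m) {c : ℕ → ℝ}
    {x : Fin (2 * m) → Fin n → ℝ} {A : (Fin (2 * m) → Fin n) → ℝ}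
    (hA : ∀ r, HasSum (fun i => c i * (∏ k, x k (r k)) ^ i) (A r))
    (hc : ∀ r : Fin (2 * m) → Fin n, Summable fun i => |c i * (∏ k, x k (r k)) ^ i|) :
    hyperDet m n A = ∑' i : {f : Fin n → ℕ // StrictAnti f},
      (∏ j, c (i.1 j)) * ∏ k, (Matrix.of fun r s => x k r ^ i.1 s).det := by
  classical
  set T : (Fin n → ℕ) → ℝ := fun f =>
    (∏ j, c (f j)) * ∏ k, (Matrix.of fun r s => x k r ^ f s).det
  set u : (Fin (2 * m) → Equiv.Perm (Fin n)) → Fin n → ℕ → ℝ :=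
    fun σ j i => c i * (∏ k, x k (σ k j)) ^ i
  have hu : ∀ σ j, Summable fun i => ‖u σ j i‖ := fun σ j => hc fun k => σ k j
  have hexpand : ∀ σ, ∏ j, A (fun k => σ k j) = ∑' f : Fin n → ℕ, ∏ j, u σ j (f j) := fun σ => by
    rw [tsum_pi_prod_eq_prod_tsum _ (hu σ)]
    exact prod_congr rfl fun j _ => (hA _).tsum_eq.symm
  have hsum : ∀ σ, Summable fun f : Fin n → ℕ => ∏ j, u σ j (f j) := fun σ =>
    (summable_norm_pi_prod _ (hu σ)).of_norm
  have hT : ∀ f, ∑ σ : Fin (2 * m) → Equiv.Perm (Fin n),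
      (∏ k, ((Equiv.Perm.sign (σ k) : ℤ) : ℝ)) * ∏ j, u σ j (f j) = T f := fun f => by
    simp only [T]
    rw [← sum_prod_sign_mul_prod_eq_prod_det, mul_sum]
    refine sum_congr rfl fun σ _ => ?_
    simp only [u, prod_mul_distrib, ← prod_pow, Matrix.of_apply]
    ring
  have hTsum : Summable T := (summable_sum fun σ _ => (hsum σ).mul_left _).congr hT
  have hev : Even (Fintype.card (Fin (2 * m))) := by simp
  have : Nonempty (Fin (2 * m)) := ⟨⟨0, by omega⟩⟩
  calc hyperDet m n A = (n.factorial : ℝ)⁻¹ * ∑' f, T f := by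
        rw [hyperDet, ← tsum_congr hT, Summable.tsum_finsetSum fun σ _ => (hsum σ).mul_left _]
        simp_rw [hexpand, tsum_mul_left]
    _ = _ := by
        rw [tsum_eq_factorial_mul_tsum_strictAnti hTsum
          (fun f τ => by
            simp only [T]
            rw [prod_det_pow_comp_perm hev, Function.comp_def,
              Equiv.prod_comp τ fun j => c (f j)])
          (fun f hf => by simp only [T, prod_det_pow_eq_zero x hf, mul_zero]),
          ← mul_assoc, inv_mul_cancel₀ (by positivity), one_mul]

theorem hyperDet_negative_binomial_general (a : ℝ) (m n : ℕ) (hm : 0 < m)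
    (x : Fin (2 * m) → Fin n → ℝ)
    (hlt : ∀ r : Fin (2 * m) → Fin n, |∏ k : Fin (2 * m), x k (r k)| < 1) :
    hyperDet m n (fun r => (1 - ∏ k : Fin (2 * m), x k (r k)) ^ (-a)) =
      (∑' i : {f : Fin n → ℕ // StrictAnti f},
        (∏ j : Fin n, risingFactorial a (i.1 j) * ((Nat.factorial (i.1 j) : ℝ))⁻¹) *
          ∏ k : Fin (2 * m), Matrix.det (Matrix.of fun r s : Fin n => x k r ^ (i.1 s))) ∧
    (0 ≤ a → (∀ k, StrictAnti (x k)) → (∀ k j, 0 ≤ x k j) →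
      0 ≤ hyperDet m n (fun r => (1 - ∏ k : Fin (2 * m), x k (r k)) ^ (-a))) := by
  have hexp := hyperDet_eq_tsum_strictAnti hm (fun r => hasSum_negBinomial a (hlt r))
    (fun r => summable_abs_negBinomial a (hlt r))
  refine ⟨hexp, fun ha hanti hx0 => hexp ▸ tsum_nonneg fun i => mul_nonneg ?_ ?_⟩
  · exact prod_nonneg fun j _ => mul_nonneg (risingFactorial_nonneg ha _) (by positivity)
  · exact prod_nonneg fun k _ => det_pow_nonneg (hanti k) (hx0 k) i.2

/-- Expansion of the hyperdeterminant of the kernel `(1 - x₁⋯x_{2m})^{-a}` as a sum over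
strictly decreasing tuples of nonnegative integers, together with its nonnegativity when
`a ≥ 0` and the vectors are strictly decreasing with nonnegative coordinates. -/
theorem hyperDet_negative_binomial (a : ℝ) (m n : ℕ) (hm : 0 < m) (hn : 0 < n)
    (x : Fin (2 * m) → Fin n → ℝ)
    (hlt : ∀ r : Fin (2 * m) → Fin n, |∏ k : Fin (2 * m), x k (r k)| < 1) :
    hyperDet m n (fun r => (1 - ∏ k : Fin (2 * m), x k (r k)) ^ (-a)) =
      (∑' i : {f : Fin n → ℕ // StrictAnti f},
        (∏ j : Fin n, risingFactorial a (i.1 j) * ((Nat.factorial (i.1 j) : ℝ))⁻¹) *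
          ∏ k : Fin (2 * m), Matrix.det (Matrix.of fun r s : Fin n => x k r ^ (i.1 s))) ∧
    (0 ≤ a → (∀ k, StrictAnti (x k)) → (∀ k j, 0 ≤ x k j) →
      0 ≤ hyperDet m n (fun r => (1 - ∏ k : Fin (2 * m), x k (r k)) ^ (-a))) :=
  hyperDet_negative_binomial_general a m n hm x hlt
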